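/- Contour representation of the correlation function (formula (eq:fintbd)). Let γ > 0 and let μ be a finite complex Borel measure on ℝ supported in [γ, ∞). Define f(z) := ∫ e^{izE} dμ(E) for Im z ≥ 0. Then for every b > 0, the limit lim_{T→∞} (1/(2πi)) ∫_{−T}^{T} f(t)/(t − ib) dt exists and equals f(ib). -/

import Mathlib

/-!
For a single frequency `E > 0`, Cauchy's formula on the rectangle `[-T, T] × [0, T]` says that the
boundary integral of `u ↦ e^{iuE} / (u - ib)` is `2πi e^{-bE}`. Since `|e^{iuE}| = e^{-E Im u}`, the
top edge contributes `O(e^{-TE})` and the vertical edges `O(1/(TE))`; hence for `E ≥ γ` the integral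
over `[-T, T]` tends to `2πi e^{-bE}` uniformly in `E`. Integrating against each Jordan part of `μ`,
a finite measure carried by `[γ, ∞)`, and exchanging the order of integration gives the theorem.
-/

open MeasureTheory Filter

/-- The integral of a complex-valued function against a finite complex Borel measure,
defined via the Jordan decompositions of the real and imaginary parts. -/
noncomputable def cmIntegral {α : Type*} [MeasurableSpace α]
    (μ : MeasureTheory.ComplexMeasure α) (f : α → ℂ) : ℂ :=
  ((∫ t, f t ∂(MeasureTheory.ComplexMeasure.re μ).toJordanDecomposition.posPart) -
      (∫ t, f t ∂(MeasureTheory.ComplexMeasure.re μ).toJordanDecomposition.negPart)) +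
    Complex.I •
      ((∫ t, f t ∂(MeasureTheory.ComplexMeasure.im μ).toJordanDecomposition.posPart) -
        (∫ t, f t ∂(MeasureTheory.ComplexMeasure.im μ).toJordanDecomposition.negPart))

open Complex Set
open scoped Interval Topology

theorem hasDerivAt_const_add_ofReal_mul (a d : ℂ) (y : ℝ) :
    HasDerivAt (fun y : ℝ => a + y * d) d y := by
  simpa using ((hasDerivAt_id y).ofReal_comp.mul_const d).const_add a

theorem integral_inv_mul_eq_log_sub {p : ℝ → ℂ} {d : ℂ} {a b : ℝ}
    (hp : ∀ y, HasDerivAt p d y) (hslit : ∀ y ∈ [[a, b]], p y ∈ slitPlane) :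
    ∫ y in a..b, (p y)⁻¹ * d = log (p b) - log (p a) := by
  have hcont : Continuous p := continuous_iff_continuousAt.2 fun y => (hp y).continuousAt
  refine intervalIntegral.integral_eq_sub_of_hasDerivAt (f := fun y => log (p y))
    (fun y hy => ?_) ?_
  · simpa [div_eq_inv_mul] using (hp y).clog_real (hslit y hy)
  · exact ((hcont.continuousOn.inv₀ fun y hy => slitPlane_ne_zero (hslit y hy)).mul
      continuousOn_const).intervalIntegrable

theorem log_sub_log_neg_of_im_pos {q : ℂ} (hq : 0 < q.im) : log q - log (-q) = Real.pi * I := by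
  apply Complex.ext
  · simp [log_re]
  · simp [log_im, arg_neg_eq_arg_sub_pi_of_im_pos hq]

theorem Differentiable.dslope {f : ℂ → ℂ} (hf : Differentiable ℂ f) (c : ℂ) :
    Differentiable ℂ (dslope f c) :=
  differentiableOn_univ.1 <| (differentiableOn_dslope univ_mem).2 hf.differentiableOn

theorem intervalIntegral_div_sub_eq_dslope_add {f : ℂ → ℂ} (hf : Differentiable ℂ f)
    {p : ℝ → ℂ} (hp : Continuous p) {c : ℂ} (hpc : ∀ y, p y ≠ c) (a b : ℝ) :
    ∫ y in a..b, f (p y) / (p y - c) =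
      (∫ y in a..b, dslope f c (p y)) + f c * ∫ y in a..b, (p y - c)⁻¹ := by
  have hne : ∀ y, p y - c ≠ 0 := fun y => sub_ne_zero.2 (hpc y)
  have hslope : IntervalIntegrable (fun y => dslope f c (p y)) volume a b :=
    ((hf.dslope c).continuous.comp hp).intervalIntegrable a b
  have hinv : IntervalIntegrable (fun y => f c * (p y - c)⁻¹) volume a b :=
    (continuous_const.mul ((hp.sub continuous_const).inv₀ hne)).intervalIntegrable a b
  rw [← intervalIntegral.integral_const_mul, ← intervalIntegral.integral_add hslope hinv]
  refine intervalIntegral.integral_congr fun y _ => ?_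
  rw [dslope_of_ne _ (hpc y), slope_def_field]
  field_simp [hne y]
  ring

/-- Counterclockwise integral over the boundary of the rectangle with opposite corners `z` and `w`,
normalised as in `Complex.integral_boundary_rect_eq_zero_of_differentiableOn`. -/
noncomputable def rectBoundaryIntegral (f : ℂ → ℂ) (z w : ℂ) : ℂ :=
  (∫ x : ℝ in z.re..w.re, f (x + z.im * I)) - (∫ x : ℝ in z.re..w.re, f (x + w.im * I)) +
    I * (∫ y : ℝ in z.im..w.im, f (w.re + y * I)) - I * ∫ y : ℝ in z.im..w.im, f (z.re + y * I)

theorem rectBoundaryIntegral_eq_zero {f : ℂ → ℂ} (hf : Differentiable ℂ f) (z w : ℂ) :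
    rectBoundaryIntegral f z w = 0 := by
  rw [rectBoundaryIntegral]
  simpa only [smul_eq_mul] using
    integral_boundary_rect_eq_zero_of_differentiableOn f z w hf.differentiableOn

theorem rectBoundaryIntegral_inv_sub {z w c : ℂ} (hc : c ∈ Ioo z.re w.re ×ℂ Ioo z.im w.im) :
    rectBoundaryIntegral (fun u => (u - c)⁻¹) z w = 2 * Real.pi * I := by
  obtain ⟨⟨hzr, hwr⟩, ⟨hzi, hwi⟩⟩ := mem_reProdIm.1 hc
  have horizontal : ∀ s : ℝ, s ≠ c.im → ∫ x : ℝ in z.re..w.re, ((x : ℂ) + s * I - c)⁻¹ =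
      log (w.re + s * I - c) - log (z.re + s * I - c) := by
    intro s hs
    convert integral_inv_mul_eq_log_sub (a := z.re) (b := w.re)
      (hasDerivAt_const_add_ofReal_mul (s * I - c) 1)
      (fun x _ => .inr (by simpa [sub_eq_zero] using hs)) using 1
    · simp only [mul_one]; congr 1; ext x; ring_nf
    · ring_nf
  have right : I * ∫ y : ℝ in z.im..w.im, ((w.re : ℂ) + y * I - c)⁻¹ =
      log (w.re + w.im * I - c) - log (w.re + z.im * I - c) := by
    rw [← intervalIntegral.integral_const_mul]
    convert integral_inv_mul_eq_log_sub (a := z.im) (b := w.im)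
      (hasDerivAt_const_add_ofReal_mul (w.re - c) I)
      (fun y _ => .inl (by simpa using hwr)) using 1
    · simp only [mul_comm I]; congr 1; ext y; ring_nf
    · congr 2 <;> ring
  have left : I * ∫ y : ℝ in z.im..w.im, ((z.re : ℂ) + y * I - c)⁻¹ =
      log (-(z.re + w.im * I - c)) - log (-(z.re + z.im * I - c)) := by
    rw [← intervalIntegral.integral_const_mul]
    convert integral_inv_mul_eq_log_sub (a := z.im) (b := w.im)
      (hasDerivAt_const_add_ofReal_mul (c - z.re) (-I))
      (fun y _ => .inl (by simpa using hzr)) using 1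
    · congr 1; ext y; rw [← neg_neg ((z.re : ℂ) + y * I - c), inv_neg]; ring_nf
    · congr 2 <;> ring
  -- The edge integrals telescope, except at the two left corners where the left edge uses
  -- `log (-·)` instead of `log`; each of these two mismatches is `πi`.
  have hA := log_sub_log_neg_of_im_pos (q := -((z.re : ℂ) + z.im * I - c)) (by simpa using hzi)
  have hD := log_sub_log_neg_of_im_pos (q := (z.re : ℂ) + w.im * I - c) (by simpa using hwi)
  rw [neg_neg] at hA
  rw [rectBoundaryIntegral, horizontal _ hzi.ne, horizontal _ hwi.ne', right, left]
  linear_combination hA + hD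

theorem rectBoundaryIntegral_div_sub {f : ℂ → ℂ} (hf : Differentiable ℂ f) {z w c : ℂ}
    (hc : c ∈ Ioo z.re w.re ×ℂ Ioo z.im w.im) :
    rectBoundaryIntegral (fun u => f u / (u - c)) z w = 2 * Real.pi * I * f c := by
  obtain ⟨⟨hzr, hwr⟩, ⟨hzi, hwi⟩⟩ := mem_reProdIm.1 hc
  have h0 := rectBoundaryIntegral_eq_zero (hf.dslope c) z w
  have h1 := rectBoundaryIntegral_inv_sub hc
  rw [rectBoundaryIntegral] at h0 h1 ⊢
  rw [intervalIntegral_div_sub_eq_dslope_add hf (by fun_prop)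
      (fun x h => hzi.ne (by simpa using congrArg im h)),
    intervalIntegral_div_sub_eq_dslope_add hf (by fun_prop)
      (fun x h => hwi.ne' (by simpa using congrArg im h)),
    intervalIntegral_div_sub_eq_dslope_add hf (by fun_prop)
      (fun y h => hwr.ne' (by simpa using congrArg re h)),
    intervalIntegral_div_sub_eq_dslope_add hf (by fun_prop)
      (fun y h => hzr.ne (by simpa using congrArg re h))]
  linear_combination h0 + f c * h1

theorem norm_exp_I_mul_mul_ofReal (u : ℂ) (E : ℝ) :
    ‖exp (I * u * E)‖ = Real.exp (-(u.im * E)) := by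
  simp [norm_exp]

theorem norm_integral_exp_mul_div_sub_horizontal_le {b E T : ℝ} (hT : 0 < T) (hbT : 2 * b ≤ T) :
    ‖∫ x : ℝ in (-T)..T, exp (I * (x + T * I) * E) / (x + T * I - I * b)‖ ≤
      4 * Real.exp (-(T * E)) := by
  have hpt : ∀ x : ℝ, ‖exp (I * (x + T * I) * E) / (x + T * I - I * b)‖ ≤
      2 * Real.exp (-(T * E)) / T := by
    intro x
    have hden : T / 2 ≤ ‖(x : ℂ) + T * I - I * b‖ :=
      le_trans (by rw [show ((x : ℂ) + T * I - I * b).im = T - b by simp,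
        abs_of_nonneg (by linarith)]; linarith) (abs_im_le_norm _)
    rw [norm_div, norm_exp_I_mul_mul_ofReal]
    calc _ ≤ Real.exp (-(((x : ℂ) + T * I).im * E)) / (T / 2) :=
          div_le_div_of_nonneg_left (Real.exp_pos _).le (by linarith) hden
      _ = _ := by rw [show ((x : ℂ) + T * I).im = T by simp]; field_simp
  calc _ ≤ 2 * Real.exp (-(T * E)) / T * |T - -T| :=
        intervalIntegral.norm_integral_le_of_norm_le_const fun x _ => hpt x
    _ = 4 * Real.exp (-(T * E)) := by
        rw [sub_neg_eq_add, abs_of_pos (by linarith)]; field_simp; ring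

theorem norm_integral_exp_mul_div_sub_vertical_le {b E H : ℝ} (s : ℝ) (hs : s ≠ 0) (hE : 0 < E)
    (hH : 0 ≤ H) :
    ‖∫ y : ℝ in 0..H, exp (I * (s + y * I) * E) / (s + y * I - I * b)‖ ≤ 1 / (|s| * E) := by
  have hpt : ∀ y : ℝ, ‖exp (I * (s + y * I) * E) / (s + y * I - I * b)‖ ≤
      Real.exp (-(y * E)) / |s| := by
    intro y
    have hden : |s| ≤ ‖(s : ℂ) + y * I - I * b‖ := le_trans (by simp) (abs_re_le_norm _)
    rw [norm_div, norm_exp_I_mul_mul_ofReal]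
    simpa using div_le_div_of_nonneg_left (Real.exp_pos _).le (abs_pos.2 hs) hden
  have hexp : ∫ y in (0:ℝ)..H, Real.exp (-(y * E)) = (1 - Real.exp (-(H * E))) / E := by
    have := intervalIntegral.integral_comp_mul_left (a := 0) (b := H)
      (fun y => Real.exp (-y)) hE.ne'
    simp only [mul_comm E] at this
    rw [this, intervalIntegral.integral_comp_neg, integral_exp]
    simp only [zero_mul, neg_zero, Real.exp_zero, smul_eq_mul]
    field_simp
  calc _ ≤ ∫ y in (0:ℝ)..H, Real.exp (-(y * E)) / |s| :=
        intervalIntegral.norm_integral_le_of_norm_le hH (ae_of_all _ fun y _ => hpt y)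
          (Continuous.intervalIntegrable (by fun_prop) _ _)
    _ = (1 - Real.exp (-(H * E))) / (|s| * E) := by
        rw [intervalIntegral.integral_div, hexp]; field_simp
    _ ≤ 1 / (|s| * E) := by gcongr; linarith [Real.exp_pos (-(H * E))]

theorem norm_integral_exp_div_sub_sub_le {γ b E T : ℝ} (hγ : 0 < γ) (hE : γ ≤ E) (hb : 0 < b)
    (hT : 2 * b ≤ T) :
    ‖(∫ t : ℝ in (-T)..T, exp (I * t * E) / (t - I * b)) -
        2 * Real.pi * I * exp (I * (I * b) * E)‖ ≤ 4 * Real.exp (-(T * γ)) + 2 / (T * γ) := by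
  have hT0 : 0 < T := by linarith
  have hE0 : 0 < E := hγ.trans_le hE
  have hC := rectBoundaryIntegral_div_sub (f := fun u => exp (I * u * E)) (by fun_prop)
    (z := -T) (w := T + T * I) (c := I * b)
    (mem_reProdIm.2 ⟨⟨by simpa using hT0, by simpa using hT0⟩,
      by simpa using hb, by simpa using (show b < T by linarith)⟩)
  simp only [rectBoundaryIntegral] at hC
  simp only [neg_im, ofReal_im, neg_zero, ofReal_zero, zero_mul, add_zero, neg_re, ofReal_re,
    add_re, mul_re, I_re, mul_zero, I_im, mul_one, sub_self, add_im, mul_im, zero_add,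
    ofReal_neg] at hC
  have htop := norm_integral_exp_mul_div_sub_horizontal_le (b := b) (E := E) hT0 hT
  have hright := norm_integral_exp_mul_div_sub_vertical_le (b := b) T hT0.ne' hE0 hT0.le
  have hleft := norm_integral_exp_mul_div_sub_vertical_le (b := b) (-T) (neg_ne_zero.2 hT0.ne')
    hE0 hT0.le
  simp only [abs_neg, abs_of_pos hT0, ofReal_neg] at hleft hright
  calc _ = ‖(∫ x : ℝ in (-T)..T, exp (I * (x + T * I) * E) / (x + T * I - I * b)) -
        I * (∫ y : ℝ in 0..T, exp (I * (T + y * I) * E) / (T + y * I - I * b)) +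
        I * ∫ y : ℝ in 0..T, exp (I * (-T + y * I) * E) / (-T + y * I - I * b)‖ := by
        congr 1; linear_combination hC
    _ ≤ 4 * Real.exp (-(T * E)) + 1 / (T * E) + 1 / (T * E) := by
        refine (norm_add_le _ _).trans
          (add_le_add ((norm_sub_le _ _).trans (add_le_add htop ?_)) ?_) <;>
          simpa only [norm_mul, norm_I, one_mul]
    _ ≤ 4 * Real.exp (-(T * γ)) + 2 / (T * γ) := by
        rw [add_assoc, ← add_div, one_add_one_eq_two]
        gcongr

theorem ofReal_sub_I_mul_ofReal_ne_zero (t : ℝ) {b : ℝ} (hb : b ≠ 0) : (t : ℂ) - I * b ≠ 0 :=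
  fun h => hb (by simpa using congrArg im h)

theorem norm_exp_I_mul_div_sub_le (t E b : ℝ) (hb : b ≠ 0) :
    ‖exp (I * t * E) / (t - I * b)‖ ≤ 1 / |b| := by
  rw [norm_div, norm_exp_I_mul_mul_ofReal]
  simpa using div_le_div_of_nonneg_left zero_le_one (abs_pos.2 hb)
    ((le_of_eq (by simp)).trans (abs_im_le_norm ((t : ℂ) - I * b)))

theorem integrable_uncurry_exp_div_sub (ν : Measure ℝ) [IsFiniteMeasure ν] {b : ℝ} (hb : b ≠ 0)
    (a₁ a₂ : ℝ) :
    Integrable (Function.uncurry fun t E : ℝ => exp (I * t * E) / (t - I * b))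
      ((volume.restrict (Ι a₁ a₂)).prod ν) :=
  have : IsFiniteMeasure (volume.restrict (Ι a₁ a₂)) :=
    isFiniteMeasure_restrict.2 (by rw [uIoc]; exact measure_Ioc_lt_top.ne)
  Integrable.of_bound (Continuous.aestronglyMeasurable <|
      (show Continuous fun p : ℝ × ℝ => exp (I * p.1 * p.2) / (p.1 - I * b) from
        Continuous.div (by fun_prop) (by fun_prop) fun p =>
          ofReal_sub_I_mul_ofReal_ne_zero p.1 hb))
    (1 / |b|) (ae_of_all _ fun p => norm_exp_I_mul_div_sub_le p.1 p.2 b hb)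

theorem integrable_intervalIntegral_exp_div_sub (ν : Measure ℝ) [IsFiniteMeasure ν] {b : ℝ}
    (hb : b ≠ 0) (a₁ a₂ : ℝ) :
    Integrable (fun E : ℝ => ∫ t in a₁..a₂, exp (I * t * E) / (t - I * b)) ν :=
  Integrable.of_bound
    (intervalIntegral.continuous_parametric_intervalIntegral_of_continuous'
      (f := fun E t : ℝ => exp (I * t * E) / (t - I * b))
      (Continuous.div (by fun_prop) (by fun_prop) fun p =>
        ofReal_sub_I_mul_ofReal_ne_zero p.2 hb)
      _ _).aestronglyMeasurable
    (1 / |b| * |a₂ - a₁|) (ae_of_all _ fun E =>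
      intervalIntegral.norm_integral_le_of_norm_le_const fun t _ =>
        norm_exp_I_mul_div_sub_le t E b hb)

theorem tendsto_integral_intervalIntegral_exp_div_sub {γ b : ℝ} (hγ : 0 < γ) (hb : 0 < b)
    (ν : Measure ℝ) [IsFiniteMeasure ν] (hν : ν (Iio γ) = 0) :
    Tendsto (fun T : ℝ => ∫ E, (∫ t in (-T)..T, exp (I * t * E) / (t - I * b)) ∂ν) atTop
      (𝓝 (∫ E, 2 * Real.pi * I * exp (I * (I * b) * E) ∂ν)) := by
  have hγE : ∀ᵐ E ∂ν, γ ≤ E :=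
    (measure_eq_zero_iff_ae_notMem.1 hν).mono fun E hE => not_lt.1 hE
  have hTγ : Tendsto (fun T : ℝ => T * γ) atTop atTop := tendsto_id.atTop_mul_const hγ
  have herr : Tendsto (fun T : ℝ => (4 * Real.exp (-(T * γ)) + 2 / (T * γ)) * ν.real univ)
      atTop (𝓝 0) := by
    simpa using (((Real.tendsto_exp_neg_atTop_nhds_zero.comp hTγ).const_mul 4).add
      (hTγ.const_div_atTop 2)).mul_const (ν.real univ)
  have he : Integrable (fun E : ℝ => exp (I * (I * b) * E)) ν :=
    Integrable.of_bound (by fun_prop : Continuous _).aestronglyMeasurable 1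
      (hγE.mono fun E hE => by
        rw [norm_exp_I_mul_mul_ofReal, Real.exp_le_one_iff]
        simpa using mul_nonneg hb.le (hγ.le.trans hE))
  rw [tendsto_iff_norm_sub_tendsto_zero]
  refine squeeze_zero' (Eventually.of_forall fun _ => norm_nonneg _) ?_ herr
  filter_upwards [eventually_ge_atTop (2 * b)] with T hT
  rw [← integral_sub (integrable_intervalIntegral_exp_div_sub ν hb.ne' _ _) (he.const_mul _)]
  exact norm_integral_le_of_norm_le_const
    (hγE.mono fun E hE => norm_integral_exp_div_sub_sub_le hγ hE hb hT)

theorem MeasureTheory.SignedMeasure.toJordanDecomposition_parts_eq_zero {α : Type*}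
    [MeasurableSpace α] {s : SignedMeasure α} {A : Set α} (hA : MeasurableSet A)
    (h : ∀ S ⊆ A, MeasurableSet S → s S = 0) :
    s.toJordanDecomposition.posPart A = 0 ∧ s.toJordanDecomposition.negPart A = 0 := by
  obtain ⟨i, hi, hpos_i, hneg_i, hpos, hneg⟩ := s.toJordanDecomposition_spec
  rw [hpos, hneg, toMeasureOfZeroLE_apply s hpos_i hi hA,
    toMeasureOfLEZero_apply s hneg_i hi.compl hA]
  simp [h _ inter_subset_right (hi.inter hA), h _ inter_subset_right (hi.compl.inter hA)]

section cmIntegral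

variable {α : Type*} [MeasurableSpace α] (μ : ComplexMeasure α)

theorem cmIntegral_const_mul (c : ℂ) (f : α → ℂ) :
    cmIntegral μ (fun x => c * f x) = c * cmIntegral μ f := by
  simp only [cmIntegral, integral_const_mul, smul_eq_mul]
  ring

theorem cmIntegral_div_const (f : α → ℂ) (c : ℂ) :
    cmIntegral μ (fun x => f x / c) = cmIntegral μ f / c := by
  simp only [cmIntegral, integral_div, smul_eq_mul]
  ring

theorem intervalIntegral_cmIntegral_comm {f : ℝ → α → ℂ} {a b : ℝ}
    (hf : ∀ (ν : Measure α) [IsFiniteMeasure ν],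
      Integrable (Function.uncurry f) ((volume.restrict (Ι a b)).prod ν)) :
    ∫ t in a..b, cmIntegral μ (f t) = cmIntegral μ fun x => ∫ t in a..b, f t x := by
  have hint : ∀ (ν : Measure α) [IsFiniteMeasure ν],
      IntervalIntegrable (fun t => ∫ x, f t x ∂ν) volume a b :=
    fun ν _ => intervalIntegrable_iff.2 (hf ν).integral_prod_left
  simp only [cmIntegral, smul_eq_mul, ← intervalIntegral_integral_swap (hf _)]
  rw [intervalIntegral.integral_add ((hint _).sub (hint _))
      (((hint _).sub (hint _)).const_mul I),
    intervalIntegral.integral_const_mul, intervalIntegral.integral_sub (hint _) (hint _),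
    intervalIntegral.integral_sub (hint _) (hint _)]

theorem tendsto_cmIntegral {ι : Type*} {l : Filter ι} {F : ι → α → ℂ} {g : α → ℂ}
    {A : Set α} (hA : MeasurableSet A) (hμ : ∀ S ⊆ A, MeasurableSet S → μ S = 0)
    (h : ∀ (ν : Measure α) [IsFiniteMeasure ν], ν A = 0 →
      Tendsto (fun i => ∫ x, F i x ∂ν) l (𝓝 (∫ x, g x ∂ν))) :
    Tendsto (fun i => cmIntegral μ (F i)) l (𝓝 (cmIntegral μ g)) := by
  obtain ⟨h₁, h₂⟩ := (ComplexMeasure.re μ).toJordanDecomposition_parts_eq_zero hA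
    fun S hS hm => congrArg Complex.re (hμ S hS hm)
  obtain ⟨h₃, h₄⟩ := (ComplexMeasure.im μ).toJordanDecomposition_parts_eq_zero hA
    fun S hS hm => congrArg Complex.im (hμ S hS hm)
  exact ((h _ h₁).sub (h _ h₂)).add (((h _ h₃).sub (h _ h₄)).const_smul I)

end cmIntegral

/-- **Contour representation of the correlation function (eq:fintbd).**
If `μ` is a finite complex Borel measure on `ℝ` supported in `[γ,∞)` with `γ > 0` and
`f(z) = ∫ e^{izE} dμ(E)`, then for every `b > 0`,
`lim_{T→∞} (1/(2πi)) ∫_{-T}^{T} f(t)/(t - ib) dt = f(ib)`. -/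
theorem contour_representation
    (γ : ℝ) (hγ : 0 < γ)
    (μ : MeasureTheory.ComplexMeasure ℝ)
    (hsupp : ∀ S : Set ℝ, MeasurableSet S → S ∩ Set.Ici γ = ∅ → μ S = 0)
    (b : ℝ) (hb : 0 < b) :
    Tendsto (fun T : ℝ =>
        (1 / (2 * Real.pi * Complex.I)) *
          ∫ t in (-T)..T,
            (cmIntegral μ fun E : ℝ => Complex.exp (Complex.I * t * E)) /
              ((t : ℂ) - Complex.I * b))
      atTop
      (nhds (cmIntegral μ fun E : ℝ =>
        Complex.exp (Complex.I * (Complex.I * b) * E))) := by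
  have hμ : ∀ S ⊆ Iio γ, MeasurableSet S → μ S = 0 := fun S hS hm =>
    hsupp S hm (eq_empty_iff_forall_notMem.2 fun x hx => not_le.2 (hS hx.1) (mem_Ici.1 hx.2))
  have hlim := (tendsto_cmIntegral μ measurableSet_Iio hμ fun ν _ hν =>
    tendsto_integral_intervalIntegral_exp_div_sub hγ hb ν hν).const_mul (1 / (2 * Real.pi * I))
  rw [cmIntegral_const_mul, ← mul_assoc, one_div_mul_cancel two_pi_I_ne_zero, one_mul] at hlim
  refine hlim.congr fun T => ?_
  simp_rw [← cmIntegral_div_const]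
  rw [intervalIntegral_cmIntegral_comm μ fun ν _ =>
    integrable_uncurry_exp_div_sub ν hb.ne' (-T) T]
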